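/- arXiv:2207.05777 — 2 statements merged into one kernel-verified Lean document; each statement's English description precedes it below -/
import Mathlib

section
/- Let Θ be a nonempty closed convex subset of ℝ^d, let Z be a metric space with its Borel σ-algebra, let ℓ : Z × ℝ^d → ℝ, let γ, β > 0 and ω, ε > 0, and for each θ ∈ Θ let P_θ be a Borel probability measure on Z (the worst-case distribution of the distributionally robust objective at θ). Assume: (i) for each θ ∈ Θ, the map ξ ↦ E_{Z∼P_θ}[ℓ(Z; ξ)] is differentiable and γ-strongly convex on Θ, with gradient equal to ξ ↦ E_{Z∼P_θ}[∇_ξ ℓ(Z; ξ)], where for each ξ the map z ↦ ∇_ξ ℓ(z; ξ) is integrable with respect to every P_θ; (ii) for each ξ ∈ Θ, the map z ↦ ∇_ξ ℓ(z; ξ) is β-Lipschitz; (iii) the family (P_θ)_{θ∈Θ} is (ωε)-sensitive in dual (Kantorovich–Rubinstein) form. Let G : Θ → Θ be such that for every θ ∈ Θ, G(θ) minimizes ξ ↦ E_{Z∼P_θ}[ℓ(Z; ξ)] over Θ. Then for all θ, θ' ∈ Θ, ‖G(θ) − G(θ')‖ ≤ ωε(β/γ)‖θ − θ'‖. -/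
/-!
Strong convexity makes the gradient of the robust objective `F_θ` strongly monotone; combined with
the first-order optimality conditions at the minimizers `G θ` and `G θ'`, this gives
`γ ‖G θ - G θ'‖ ≤ ‖∇F_θ (G θ') - ∇F_θ' (G θ')‖`. The right-hand side is the gap between the
expectations of the `β`-Lipschitz map `z ↦ ∇ℓ(z; G θ')` under `P_θ` and `P_θ'`, which the dual
form of sensitivity bounds by `β ωε ‖θ - θ'‖` after testing it against the direction of the gap.
-/

open MeasureTheory

open scoped RealInnerProductSpace NNReal

theorem ConvexOn.le_sub_of_hasFDerivAt {E : Type*} [NormedAddCommGroup E] [NormedSpace ℝ E]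
    {s : Set E} {f : E → ℝ} {f' : E →L[ℝ] ℝ} {x y : E}
    (hf : ConvexOn ℝ s f) (hx : x ∈ s) (hy : y ∈ s) (hd : HasFDerivAt f f' x) :
    f' (y - x) ≤ f y - f x := by
  have hline : HasDerivAt (f ∘ AffineMap.lineMap (k := ℝ) x y) (f' (y - x)) 0 :=
    (AffineMap.lineMap_apply_zero (k := ℝ) x y ▸ hd).comp_hasDerivAt 0
      AffineMap.hasDerivAt_lineMap
  simpa [slope_def_field] using
    (hf.comp_affineMap (AffineMap.lineMap x y : ℝ →ᵃ[ℝ] E)).le_slope_of_hasDerivAt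
      (by simpa using hx) (by simpa using hy) zero_lt_one hline

section InnerProductSpace

variable {E : Type*} [NormedAddCommGroup E] [InnerProductSpace ℝ E] [CompleteSpace E]
  {s : Set E} {f g : E → ℝ} {f' g' : E → E} {m : ℝ} {x y : E}

theorem StrongConvexOn.mul_norm_sub_sq_le_inner_gradient_sub (hf : StrongConvexOn s m f)
    (hx : x ∈ s) (hy : y ∈ s) (hfx : HasGradientAt f (f' x) x) (hfy : HasGradientAt f (f' y) y) :
    m * ‖x - y‖ ^ 2 ≤ ⟪f' x - f' y, x - y⟫ := by
  have hconv := strongConvexOn_iff_convex.mp hf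
  have hd : ∀ z, HasGradientAt f (f' z) z → HasFDerivAt (fun w => f w - m / 2 * ‖w‖ ^ 2)
      (InnerProductSpace.toDual ℝ E (f' z) - (m / 2) • 2 • innerSL ℝ z) z := fun z hz =>
    (hasGradientAt_iff_hasFDerivAt.mp hz).sub
      ((hasStrictFDerivAt_norm_sq z).hasFDerivAt.const_mul (m / 2))
  have h₁ := hconv.le_sub_of_hasFDerivAt hx hy (hd x hfx)
  have h₂ := hconv.le_sub_of_hasFDerivAt hy hx (hd y hfy)
  simp only [sub_apply, smul_apply, InnerProductSpace.toDual_apply_apply, innerSL_apply_apply,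
    nsmul_eq_mul, Nat.cast_ofNat, smul_eq_mul] at h₁ h₂
  have hnorm : ‖x - y‖ ^ 2 = ⟪x, x - y⟫ - ⟪y, x - y⟫ := by
    rw [← inner_sub_left, real_inner_self_eq_norm_sq]
  rw [← neg_sub x y, inner_neg_right, inner_neg_right] at h₁
  rw [hnorm, inner_sub_left]
  linarith

theorem IsMinOn.inner_gradient_sub_nonneg (hs : Convex ℝ s) (hmin : IsMinOn f s x)
    (hx : x ∈ s) (hy : y ∈ s) (hd : HasGradientAt f (f' x) x) : 0 ≤ ⟪f' x, y - x⟫ := by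
  simpa using hmin.localize.hasFDerivWithinAt_nonneg
    (hasGradientAt_iff_hasFDerivAt.mp hd).hasFDerivWithinAt
    (sub_mem_posTangentConeAt_of_segment_subset (hs.segment_subset hx hy))

theorem StrongConvexOn.mul_norm_sub_le_of_isMinOn (hf : StrongConvexOn s m f)
    (hfmin : IsMinOn f s x) (hgmin : IsMinOn g s y) (hx : x ∈ s) (hy : y ∈ s)
    (hfx : HasGradientAt f (f' x) x) (hfy : HasGradientAt f (f' y) y)
    (hgy : HasGradientAt g (g' y) y) :
    m * ‖x - y‖ ≤ ‖f' y - g' y‖ := by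
  have hmono := hf.mul_norm_sub_sq_le_inner_gradient_sub hx hy hfx hfy
  have hoptf := hfmin.inner_gradient_sub_nonneg hf.1 hx hy hfx
  have hoptg := hgmin.inner_gradient_sub_nonneg hf.1 hy hx hgy
  rcases (norm_nonneg (x - y)).eq_or_lt with hxy | hxy
  · rw [← hxy, mul_zero]
    exact norm_nonneg _
  refine le_of_mul_le_mul_right ?_ hxy
  calc m * ‖x - y‖ * ‖x - y‖ = m * ‖x - y‖ ^ 2 := by ring
    _ ≤ ⟪g' y - f' y, x - y⟫ := by
      rw [← neg_sub x y, inner_neg_right] at hoptf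
      rw [inner_sub_left] at hmono ⊢
      linarith
    _ ≤ ‖f' y - g' y‖ * ‖x - y‖ := by
      rw [← norm_neg (f' y - g' y), neg_sub]
      exact real_inner_le_norm _ _

end InnerProductSpace

def IsDualSensitiveOn {E Z : Type*} [SeminormedAddCommGroup E] [PseudoMetricSpace Z]
    [MeasurableSpace Z] (P : E → Measure Z) (S : Set E) (s : ℝ) : Prop :=
  ∀ g : Z → ℝ, LipschitzWith 1 g → (∀ θ ∈ S, Integrable g (P θ)) →
    ∀ θ ∈ S, ∀ θ' ∈ S, |(∫ z, g z ∂(P θ)) - ∫ z, g z ∂(P θ')| ≤ s * ‖θ - θ'‖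

namespace IsDualSensitiveOn

variable {E Z : Type*} [SeminormedAddCommGroup E] [PseudoMetricSpace Z] [MeasurableSpace Z]
  {P : E → Measure Z} {S : Set E} {s : ℝ} {θ θ' : E}

theorem abs_integral_sub_le (hP : IsDualSensitiveOn P S s) {g : Z → ℝ} {K : ℝ≥0} (hK : 0 < K)
    (hg : LipschitzWith K g) (hint : ∀ θ ∈ S, Integrable g (P θ)) (hθ : θ ∈ S) (hθ' : θ' ∈ S) :
    |(∫ z, g z ∂(P θ)) - ∫ z, g z ∂(P θ')| ≤ K * (s * ‖θ - θ'‖) := by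
  have hscaled : LipschitzWith 1 (fun z => (K : ℝ)⁻¹ * g z) := by
    simpa [Function.comp_def, ← NNReal.coe_inv, hK.ne'] using
      (lipschitzWith_smul (K : ℝ)⁻¹).comp hg
  have hgap := hP _ hscaled (fun θ hθ => (hint θ hθ).const_mul _) θ hθ θ' hθ'
  rwa [integral_const_mul, integral_const_mul, ← mul_sub, abs_mul, abs_inv, NNReal.abs_eq,
    inv_mul_le_iff₀ (by exact_mod_cast hK)] at hgap

theorem norm_integral_sub_le {F : Type*} [NormedAddCommGroup F] [InnerProductSpace ℝ F]
    [CompleteSpace F] (hP : IsDualSensitiveOn P S s) {h : Z → F} {K : ℝ≥0} (hK : 0 < K)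
    (hh : LipschitzWith K h) (hint : ∀ θ ∈ S, Integrable h (P θ)) (hθ : θ ∈ S) (hθ' : θ' ∈ S) :
    ‖(∫ z, h z ∂(P θ)) - ∫ z, h z ∂(P θ')‖ ≤ K * (s * ‖θ - θ'‖) := by
  set v := (∫ z, h z ∂(P θ)) - ∫ z, h z ∂(P θ')
  rcases (norm_nonneg v).eq_or_lt with hv | hv
  · rw [← hv]
    simpa using hP.abs_integral_sub_le hK (LipschitzWith.const' 0)
      (fun _ _ => integrable_zero _ _ _) hθ hθ'
  -- Test the sensitivity against the scalar function `⟪v, h ·⟫`, whose integral gap is `‖v‖²`.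
  have hlip : LipschitzWith (‖v‖₊ * K) (fun z => ⟪v, h z⟫) := by
    have hnorm : ‖innerSL ℝ v‖₊ = ‖v‖₊ := NNReal.eq (innerSL_apply_norm ℝ v)
    simpa [Function.comp_def, hnorm] using (innerSL ℝ v).lipschitz.comp hh
  have hgap := hP.abs_integral_sub_le (mul_pos (nnnorm_pos.mpr (norm_pos_iff.mp hv)) hK) hlip
    (fun θ hθ => (hint θ hθ).const_inner v) hθ hθ'
  rw [integral_inner (hint θ hθ), integral_inner (hint θ' hθ'), ← inner_sub_right,
    real_inner_self_eq_norm_sq, abs_of_nonneg (sq_nonneg _), NNReal.coe_mul, coe_nnnorm,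
    sq, mul_assoc] at hgap
  exact le_of_mul_le_mul_left hgap hv

end IsDualSensitiveOn

theorem rdro_operator_contraction_general
    {d : ℕ} (Θ : Set (EuclideanSpace ℝ (Fin d)))
    {Z : Type*} [MetricSpace Z] [MeasurableSpace Z]
    (ℓ : Z → EuclideanSpace ℝ (Fin d) → ℝ)
    (γ β ω ε : ℝ) (hγ : 0 < γ) (hβ : 0 < β)
    (P : EuclideanSpace ℝ (Fin d) → Measure Z)
    -- (i) differentiability and γ-strong convexity on Θ of the robust objective,
    -- whose gradient is the expectation of the gradient of the loss
    (hdiff : ∀ θ ∈ Θ, Differentiable ℝ (fun ξ => ∫ z, ℓ z ξ ∂(P θ)))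
    (hsc : ∀ θ ∈ Θ, ConvexOn ℝ Θ
      (fun ξ => (∫ z, ℓ z ξ ∂(P θ)) - γ / 2 * ‖ξ‖ ^ 2))
    (hgradInt : ∀ (ξ : EuclideanSpace ℝ (Fin d)), ∀ θ ∈ Θ,
      Integrable (fun z => gradient (ℓ z) ξ) (P θ))
    (hgrad : ∀ θ ∈ Θ, ∀ ξ : EuclideanSpace ℝ (Fin d),
      gradient (fun ξ' => ∫ z, ℓ z ξ' ∂(P θ)) ξ = ∫ z, gradient (ℓ z) ξ ∂(P θ))
    -- (ii) β-joint smoothness in z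
    (hsmooth : ∀ ξ ∈ Θ, ∀ z z' : Z,
      ‖gradient (ℓ z) ξ - gradient (ℓ z') ξ‖ ≤ β * dist z z')
    -- (iii) (ωε)-sensitivity in dual (Kantorovich–Rubinstein) form
    (hsens : ∀ g : Z → ℝ, LipschitzWith 1 g → (∀ θ ∈ Θ, Integrable g (P θ)) →
      ∀ θ ∈ Θ, ∀ θ' ∈ Θ,
        |(∫ z, g z ∂(P θ)) - ∫ z, g z ∂(P θ')| ≤ ω * ε * ‖θ - θ'‖)
    -- the RDRO update operator
    (G : EuclideanSpace ℝ (Fin d) → EuclideanSpace ℝ (Fin d))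
    (hGmem : ∀ θ ∈ Θ, G θ ∈ Θ)
    (hGmin : ∀ θ ∈ Θ, ∀ ξ ∈ Θ, (∫ z, ℓ z (G θ) ∂(P θ)) ≤ ∫ z, ℓ z ξ ∂(P θ)) :
    ∀ θ ∈ Θ, ∀ θ' ∈ Θ, ‖G θ - G θ'‖ ≤ ω * ε * (β / γ) * ‖θ - θ'‖ := by
  intro θ hθ θ' hθ'
  have hF : ∀ t ∈ Θ, ∀ ξ, HasGradientAt (fun ξ => ∫ z, ℓ z ξ ∂(P t))
      (∫ z, gradient (ℓ z) ξ ∂(P t)) ξ :=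
    fun t ht ξ => hgrad t ht ξ ▸ (hdiff t ht ξ).hasGradientAt
  have hmin : ∀ t ∈ Θ, IsMinOn (fun ξ => ∫ z, ℓ z ξ ∂(P t)) Θ (G t) :=
    fun t ht => isMinOn_iff.mpr (hGmin t ht)
  have hstable := (strongConvexOn_iff_convex.mpr (hsc θ hθ)).mul_norm_sub_le_of_isMinOn
    (f' := fun ξ => ∫ z, gradient (ℓ z) ξ ∂(P θ)) (g' := fun ξ => ∫ z, gradient (ℓ z) ξ ∂(P θ'))
    (hmin θ hθ) (hmin θ' hθ') (hGmem θ hθ) (hGmem θ' hθ') (hF θ hθ _) (hF θ hθ _) (hF θ' hθ' _)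
  have hlip : LipschitzWith β.toNNReal (fun z => gradient (ℓ z) (G θ')) :=
    LipschitzWith.of_dist_le' fun z z' => by
      simpa only [dist_eq_norm] using hsmooth _ (hGmem θ' hθ') z z'
  have hgap := IsDualSensitiveOn.norm_integral_sub_le (s := ω * ε) hsens
    (Real.toNNReal_pos.mpr hβ) hlip (fun t ht => hgradInt _ t ht) hθ hθ'
  rw [Real.coe_toNNReal _ hβ.le] at hgap
  rw [show ω * ε * (β / γ) * ‖θ - θ'‖ = β * (ω * ε * ‖θ - θ'‖) / γ by ring, le_div_iff₀ hγ]
  linarith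

/-- Claim (1) of the paper's main theorem: under robust strong convexity, robust joint
smoothness and robust ε-sensitivity (in dual Kantorovich–Rubinstein form), the repeated
distributionally robust optimization operator `G` is `ωε(β/γ)`-Lipschitz. -/
theorem rdro_operator_contraction
    {d : ℕ} (Θ : Set (EuclideanSpace ℝ (Fin d)))
    (hΘne : Θ.Nonempty) (hΘclosed : IsClosed Θ) (hΘconv : Convex ℝ Θ)
    {Z : Type*} [MetricSpace Z] [MeasurableSpace Z] [BorelSpace Z]
    (ℓ : Z → EuclideanSpace ℝ (Fin d) → ℝ)
    (γ β ω ε : ℝ) (hγ : 0 < γ) (hβ : 0 < β) (hω : 0 < ω) (hε : 0 < ε)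
    (P : EuclideanSpace ℝ (Fin d) → Measure Z)
    (hProb : ∀ θ ∈ Θ, IsProbabilityMeasure (P θ))
    -- (i) differentiability and γ-strong convexity on Θ of the robust objective,
    -- whose gradient is the expectation of the gradient of the loss
    (hdiff : ∀ θ ∈ Θ, Differentiable ℝ (fun ξ => ∫ z, ℓ z ξ ∂(P θ)))
    (hsc : ∀ θ ∈ Θ, ConvexOn ℝ Θ
      (fun ξ => (∫ z, ℓ z ξ ∂(P θ)) - γ / 2 * ‖ξ‖ ^ 2))
    (hgradInt : ∀ (ξ : EuclideanSpace ℝ (Fin d)), ∀ θ ∈ Θ,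
      Integrable (fun z => gradient (ℓ z) ξ) (P θ))
    (hgrad : ∀ θ ∈ Θ, ∀ ξ : EuclideanSpace ℝ (Fin d),
      gradient (fun ξ' => ∫ z, ℓ z ξ' ∂(P θ)) ξ = ∫ z, gradient (ℓ z) ξ ∂(P θ))
    -- (ii) β-joint smoothness in z
    (hsmooth : ∀ ξ ∈ Θ, ∀ z z' : Z,
      ‖gradient (ℓ z) ξ - gradient (ℓ z') ξ‖ ≤ β * dist z z')
    -- (iii) (ωε)-sensitivity in dual (Kantorovich–Rubinstein) form
    (hsens : ∀ g : Z → ℝ, LipschitzWith 1 g → (∀ θ ∈ Θ, Integrable g (P θ)) →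
      ∀ θ ∈ Θ, ∀ θ' ∈ Θ,
        |(∫ z, g z ∂(P θ)) - ∫ z, g z ∂(P θ')| ≤ ω * ε * ‖θ - θ'‖)
    -- the RDRO update operator
    (G : EuclideanSpace ℝ (Fin d) → EuclideanSpace ℝ (Fin d))
    (hGmem : ∀ θ ∈ Θ, G θ ∈ Θ)
    (hGmin : ∀ θ ∈ Θ, ∀ ξ ∈ Θ, (∫ z, ℓ z (G θ) ∂(P θ)) ≤ ∫ z, ℓ z ξ ∂(P θ)) :
    ∀ θ ∈ Θ, ∀ θ' ∈ Θ, ‖G θ - G θ'‖ ≤ ω * ε * (β / γ) * ‖θ - θ'‖ :=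
  rdro_operator_contraction_general Θ ℓ γ β ω ε hγ hβ P hdiff hsc hgradInt hgrad hsmooth hsens G
    hGmem hGmin
end

section
/- Let Θ be a nonempty closed convex subset of ℝ^d, let Z be a metric space with its Borel σ-algebra, let γ, β > 0 and ε > 0, and for each θ ∈ Θ let D(θ) be a Borel probability measure on Z (the distribution induced by deploying the model θ). Let ℓ : Z × ℝ^d → ℝ be a loss such that: (i) for each z ∈ Z, the map ξ ↦ ℓ(z; ξ) is differentiable and γ-strongly convex on Θ; (ii) for each ξ ∈ Θ, the map z ↦ ∇_ξ ℓ(z; ξ) is β-Lipschitz, and for each z, the map ξ ↦ ∇_ξ ℓ(z; ξ) is β-Lipschitz on Θ; (iii) for each θ ∈ Θ, the map ξ ↦ E_{Z∼D(θ)}[ℓ(Z; ξ)] is differentiable with gradient ξ ↦ E_{Z∼D(θ)}[∇_ξ ℓ(Z; ξ)], where z ↦ ∇_ξ ℓ(z; ξ) is integrable with respect to every D(θ); (iv) the family (D(θ))_{θ∈Θ} is ε-sensitive in dual (Kantorovich–Rubinstein) form. Let G : Θ → Θ be such that for every θ ∈ Θ, G(θ) minimizes ξ ↦ E_{Z∼D(θ)}[ℓ(Z;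 ξ)] over Θ. Then for all θ, θ' ∈ Θ, ‖G(θ) − G(θ')‖ ≤ ε(β/γ)‖θ − θ'‖. -/
/-!
Write `R_θ(ξ) = 𝔼_{z∼D(θ)} ℓ(z; ξ)` and `u = G θ - G θ'`. Strong convexity of each `ℓ(z; ·)`
makes its gradient strongly monotone, and integrating gives
`γ‖u‖² ≤ ⟪∇R_θ'(G θ) - ∇R_θ'(G θ'), u⟫`. The first-order optimality conditions of `G θ` for
`R_θ` and of `G θ'` for `R_θ'` bound this by `⟪∇R_θ'(G θ) - ∇R_θ(G θ), u⟫`. Both gradients are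
means of the `β`-Lipschitz map `z ↦ ∇ℓ(z; G θ)`, so by Kantorovich–Rubinstein duality (tested
against `z ↦ ⟪v, ∇ℓ(z; G θ)⟫` for unit vectors `v`) their difference has norm at most
`β ε ‖θ - θ'‖`, and Cauchy–Schwarz finishes.
-/

open MeasureTheory
open scoped RealInnerProductSpace NNReal

section Convexity

variable {E : Type*} [NormedAddCommGroup E] [InnerProductSpace ℝ E] [CompleteSpace E]
  {s : Set E} {f : E → ℝ} {a b x y : E}

theorem ConvexOn.inner_le_sub_of_hasGradientAt (hf : ConvexOn ℝ s f) (hx : x ∈ s) (hy : y ∈ s)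
    (ha : HasGradientAt f a x) : ⟪a, y - x⟫ ≤ f y - f x := by
  have hφ : ConvexOn ℝ (AffineMap.lineMap x y ⁻¹' s) (f ∘ AffineMap.lineMap x y) :=
    hf.comp_affineMap _
  have hderiv : HasDerivAt (f ∘ AffineMap.lineMap x y) ⟪a, y - x⟫ (0 : ℝ) := by
    have ha' : HasFDerivAt f (InnerProductSpace.toDual ℝ E a) (AffineMap.lineMap x y (0 : ℝ)) :=
      by simpa using ha.hasFDerivAt
    simpa using ha'.comp_hasDerivAt (0 : ℝ) AffineMap.hasDerivAt_lineMap
  simpa [slope_def_field] using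
    hφ.le_slope_of_hasDerivAt (by simpa using hx) (by simpa using hy) zero_lt_one hderiv

theorem StrongConvexOn.mul_norm_sub_sq_le_inner_of_hasGradientAt {m : ℝ}
    (hf : StrongConvexOn s m f) (hx : x ∈ s) (hy : y ∈ s)
    (ha : HasGradientAt f a x) (hb : HasGradientAt f b y) :
    m * ‖x - y‖ ^ 2 ≤ ⟪a - b, x - y⟫ := by
  -- gradient inequality for the convex `f - m/2 ‖·‖²` at `x` and at `y`, added up
  have hconv := strongConvexOn_iff_convex.mp hf
  have hgrad : ∀ {ξ c : E}, HasGradientAt f c ξ →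
      HasGradientAt (fun ζ ↦ f ζ - m / 2 * ‖ζ‖ ^ 2) (c - m • ξ) ξ := by
    intro ξ c hc
    rw [hasGradientAt_iff_hasFDerivAt]
    refine (hc.hasFDerivAt.fun_sub
      ((hasStrictFDerivAt_norm_sq ξ).hasFDerivAt.const_mul (m / 2))).congr_fderiv ?_
    ext v
    simp only [sub_apply, smul_apply,
      InnerProductSpace.toDual_apply_apply, innerSL_apply_apply, inner_sub_left,
      real_inner_smul_left, nsmul_eq_mul, smul_eq_mul]
    ring
  have h₁ := hconv.inner_le_sub_of_hasGradientAt hx hy (hgrad ha)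
  have h₂ := hconv.inner_le_sub_of_hasGradientAt hy hx (hgrad hb)
  have hsq : ⟪x - y, x - y⟫ = ‖x - y‖ ^ 2 := real_inner_self_eq_norm_sq _
  simp only [inner_sub_left, inner_sub_right, real_inner_smul_left] at h₁ h₂ hsq ⊢
  rw [← hsq]
  rw [real_inner_comm x y] at *
  linarith

theorem IsMinOn.inner_nonneg_of_hasGradientAt (h : IsMinOn f s x) (hs : Convex ℝ s)
    (hx : x ∈ s) (ha : HasGradientAt f a x) (hy : y ∈ s) : 0 ≤ ⟪a, y - x⟫ := by
  have := h.localize.hasFDerivWithinAt_nonneg ha.hasFDerivAt.hasFDerivWithinAt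
    (sub_mem_posTangentConeAt_of_segment_subset (hs.segment_subset hx hy))
  simpa using this

end Convexity

theorem norm_le_of_mul_norm_sq_le_inner {E : Type*} [NormedAddCommGroup E]
    [InnerProductSpace ℝ E] {u w : E} {γ C : ℝ} (hγ : 0 < γ) (h : γ * ‖u‖ ^ 2 ≤ ⟪w, u⟫)
    (hw : ‖w‖ ≤ C) :
    ‖u‖ ≤ C / γ := by
  have hC : γ * ‖u‖ ^ 2 ≤ C * ‖u‖ :=
    h.trans <| (real_inner_le_norm w u).trans <| by gcongr
  rw [le_div_iff₀ hγ]
  nlinarith [norm_nonneg u, (norm_nonneg w).trans hw]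

section Sensitivity

variable {Z : Type*} [MeasurableSpace Z] {F : Type*} [NormedAddCommGroup F]
  [InnerProductSpace ℝ F] [CompleteSpace F]

theorem le_inner_integral_of_forall_le {μ : Measure Z} [IsProbabilityMeasure μ] {g : Z → F}
    (hg : Integrable g μ) {v : F} {c : ℝ} (h : ∀ z, c ≤ ⟪g z, v⟫) : c ≤ ⟪∫ z, g z ∂μ, v⟫ := by
  rw [real_inner_comm, ← integral_inner hg]
  simpa [real_inner_comm] using integral_mono (integrable_const c) (hg.inner_const v) h

variable [MetricSpace Z] {P : Type*} [SeminormedAddCommGroup P]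

/-- Dual (Kantorovich–Rubinstein) form of `W₁(D θ, D θ') ≤ ε ‖θ - θ'‖` on `Θ`. -/
def IsSensitiveOn (Θ : Set P) (D : P → Measure Z) (ε : ℝ) : Prop :=
  ∀ g : Z → ℝ, LipschitzWith 1 g → (∀ θ ∈ Θ, Integrable g (D θ)) →
    ∀ θ ∈ Θ, ∀ θ' ∈ Θ, |(∫ z, g z ∂(D θ)) - ∫ z, g z ∂(D θ')| ≤ ε * ‖θ - θ'‖

theorem IsSensitiveOn.norm_integral_sub_le {Θ : Set P} {D : P → Measure Z} {ε : ℝ}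
    (hD : IsSensitiveOn Θ D ε) {g : Z → F} {K : ℝ≥0} (hK : 0 < K) (hg : LipschitzWith K g)
    (hint : ∀ θ ∈ Θ, Integrable g (D θ)) {θ θ' : P} (hθ : θ ∈ Θ) (hθ' : θ' ∈ Θ) :
    ‖(∫ z, g z ∂(D θ)) - ∫ z, g z ∂(D θ')‖ ≤ K * (ε * ‖θ - θ'‖) := by
  set w := (∫ z, g z ∂(D θ)) - ∫ z, g z ∂(D θ')
  set v := ‖w‖⁻¹ • w
  have hv : ‖v‖ ≤ 1 := by
    rw [norm_smul, norm_inv, norm_norm]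
    exact inv_mul_le_one
  have hvw : ⟪v, w⟫ = ‖w‖ := by
    rw [real_inner_smul_left, real_inner_self_eq_norm_sq]
    rcases eq_or_ne ‖w‖ 0 with h | h
    · simp [h]
    · field_simp
  have hlip : LipschitzWith 1 fun z ↦ (K : ℝ)⁻¹ * ⟪v, g z⟫ := by
    refine LipschitzWith.of_dist_le_mul fun z z' ↦ ?_
    rw [Real.dist_eq, ← mul_sub, ← inner_sub_right, abs_mul, abs_of_pos (by positivity),
      NNReal.coe_one, one_mul, inv_mul_le_iff₀ (by positivity)]
    calc |⟪v, g z - g z'⟫| ≤ ‖v‖ * ‖g z - g z'‖ := abs_real_inner_le_norm _ _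
      _ ≤ 1 * (K * dist z z') := by
          gcongr
          rw [← dist_eq_norm]
          exact hg.dist_le_mul z z'
      _ = K * dist z z' := one_mul _
  have hbound := hD _ hlip (fun θ hθ ↦ ((hint θ hθ).const_inner v).const_mul _) θ hθ θ' hθ'
  rw [integral_const_mul, integral_const_mul, integral_inner (hint θ hθ),
    integral_inner (hint θ' hθ'), ← mul_sub, ← inner_sub_right, hvw, abs_mul,
    abs_of_pos (by positivity), abs_norm, inv_mul_le_iff₀ (by positivity)] at hbound
  exact hbound

end Sensitivity

theorem rrm_operator_contraction_general
    {d : ℕ} (Θ : Set (EuclideanSpace ℝ (Fin d)))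
    (hΘconv : Convex ℝ Θ)
    {Z : Type*} [MetricSpace Z] [MeasurableSpace Z] [BorelSpace Z]
    (ℓ : Z → EuclideanSpace ℝ (Fin d) → ℝ)
    (γ β ε : ℝ) (hγ : 0 < γ) (hβ : 0 < β)
    (D : EuclideanSpace ℝ (Fin d) → Measure Z)
    (hProb : ∀ θ ∈ Θ, IsProbabilityMeasure (D θ))
    -- (i) differentiability and γ-strong convexity of the loss in the parameter
    (hdiffℓ : ∀ z : Z, Differentiable ℝ (ℓ z))
    (hsc : ∀ z : Z, ConvexOn ℝ Θ (fun ξ => ℓ z ξ - γ / 2 * ‖ξ‖ ^ 2))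
    -- (ii) β-joint smoothness of the loss
    (hsmoothz : ∀ ξ ∈ Θ, ∀ z z' : Z,
      ‖gradient (ℓ z) ξ - gradient (ℓ z') ξ‖ ≤ β * dist z z')
    -- (iii) differentiability of the expected loss with gradient the expected gradient
    (hdiff : ∀ θ ∈ Θ, Differentiable ℝ (fun ξ => ∫ z, ℓ z ξ ∂(D θ)))
    (hgradInt : ∀ (ξ : EuclideanSpace ℝ (Fin d)), ∀ θ ∈ Θ,
      Integrable (fun z => gradient (ℓ z) ξ) (D θ))
    (hgrad : ∀ θ ∈ Θ, ∀ ξ : EuclideanSpace ℝ (Fin d),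
      gradient (fun ξ' => ∫ z, ℓ z ξ' ∂(D θ)) ξ = ∫ z, gradient (ℓ z) ξ ∂(D θ))
    -- (iv) ε-sensitivity in dual (Kantorovich–Rubinstein) form
    (hsens : ∀ g : Z → ℝ, LipschitzWith 1 g → (∀ θ ∈ Θ, Integrable g (D θ)) →
      ∀ θ ∈ Θ, ∀ θ' ∈ Θ,
        |(∫ z, g z ∂(D θ)) - ∫ z, g z ∂(D θ')| ≤ ε * ‖θ - θ'‖)
    -- the RRM update operator
    (G : EuclideanSpace ℝ (Fin d) → EuclideanSpace ℝ (Fin d))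
    (hGmem : ∀ θ ∈ Θ, G θ ∈ Θ)
    (hGmin : ∀ θ ∈ Θ, ∀ ξ ∈ Θ, (∫ z, ℓ z (G θ) ∂(D θ)) ≤ ∫ z, ℓ z ξ ∂(D θ)) :
    ∀ θ ∈ Θ, ∀ θ' ∈ Θ, ‖G θ - G θ'‖ ≤ ε * (β / γ) * ‖θ - θ'‖ := by
  intro θ hθ θ' hθ'
  have := hProb θ' hθ'
  set u := G θ - G θ'
  have hopt : ∀ θ ∈ Θ, ∀ ξ ∈ Θ, 0 ≤ ⟪∫ z, gradient (ℓ z) (G θ) ∂(D θ), ξ - G θ⟫ :=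
    fun θ hθ ξ hξ ↦ (isMinOn_iff.mpr (hGmin θ hθ)).inner_nonneg_of_hasGradientAt hΘconv
      (hGmem θ hθ) (hgrad θ hθ (G θ) ▸ (hdiff θ hθ (G θ)).hasGradientAt) hξ
  have hstrong : γ * ‖u‖ ^ 2 ≤
      ⟪∫ z, gradient (ℓ z) (G θ) - gradient (ℓ z) (G θ') ∂(D θ'), u⟫ :=
    le_inner_integral_of_forall_le ((hgradInt _ θ' hθ').sub (hgradInt _ θ' hθ')) fun z ↦
      (strongConvexOn_iff_convex.mpr (hsc z)).mul_norm_sub_sq_le_inner_of_hasGradientAt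
        (hGmem θ hθ) (hGmem θ' hθ') (hdiffℓ z _).hasGradientAt (hdiffℓ z _).hasGradientAt
  have hshift : ‖(∫ z, gradient (ℓ z) (G θ) ∂(D θ')) - ∫ z, gradient (ℓ z) (G θ) ∂(D θ)‖ ≤
      β * (ε * ‖θ - θ'‖) := by
    have hlip : LipschitzWith (Real.toNNReal β) fun z ↦ gradient (ℓ z) (G θ) :=
      .of_dist_le_mul fun z z' ↦ by
        simpa [dist_eq_norm, hβ.le] using hsmoothz (G θ) (hGmem θ hθ) z z'
    simpa [hβ.le, norm_sub_rev θ'] using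
      (show IsSensitiveOn Θ D ε from hsens).norm_integral_sub_le
        (Real.toNNReal_pos.mpr hβ) hlip (hgradInt _) hθ' hθ
  have hkey : γ * ‖u‖ ^ 2 ≤
      ⟪(∫ z, gradient (ℓ z) (G θ) ∂(D θ')) - ∫ z, gradient (ℓ z) (G θ) ∂(D θ), u⟫ := by
    have h₁ := hopt θ hθ (G θ') (hGmem θ' hθ')
    have h₂ := hopt θ' hθ' (G θ) (hGmem θ hθ)
    rw [← neg_sub, inner_neg_right] at h₁
    rw [integral_sub (hgradInt _ θ' hθ') (hgradInt _ θ' hθ'), inner_sub_left] at hstrong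
    rw [inner_sub_left]
    linarith
  exact (norm_le_of_mul_norm_sq_le_inner hγ hkey hshift).trans_eq (by ring)

/-- Claim (1) of Theorem 3.5 of Perdomo et al. as stated in the paper: under γ-strong
convexity, β-joint smoothness of the loss and ε-sensitivity of the distribution map (in
dual Kantorovich–Rubinstein form), the repeated risk minimization operator `G` is
`ε(β/γ)`-Lipschitz. -/
theorem rrm_operator_contraction
    {d : ℕ} (Θ : Set (EuclideanSpace ℝ (Fin d)))
    (hΘne : Θ.Nonempty) (hΘclosed : IsClosed Θ) (hΘconv : Convex ℝ Θ)
    {Z : Type*} [MetricSpace Z] [MeasurableSpace Z] [BorelSpace Z]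
    (ℓ : Z → EuclideanSpace ℝ (Fin d) → ℝ)
    (γ β ε : ℝ) (hγ : 0 < γ) (hβ : 0 < β) (hε : 0 < ε)
    (D : EuclideanSpace ℝ (Fin d) → Measure Z)
    (hProb : ∀ θ ∈ Θ, IsProbabilityMeasure (D θ))
    -- (i) differentiability and γ-strong convexity of the loss in the parameter
    (hdiffℓ : ∀ z : Z, Differentiable ℝ (ℓ z))
    (hsc : ∀ z : Z, ConvexOn ℝ Θ (fun ξ => ℓ z ξ - γ / 2 * ‖ξ‖ ^ 2))
    -- (ii) β-joint smoothness of the loss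
    (hsmoothz : ∀ ξ ∈ Θ, ∀ z z' : Z,
      ‖gradient (ℓ z) ξ - gradient (ℓ z') ξ‖ ≤ β * dist z z')
    (hsmoothξ : ∀ z : Z, ∀ ξ ∈ Θ, ∀ ξ' ∈ Θ,
      ‖gradient (ℓ z) ξ - gradient (ℓ z) ξ'‖ ≤ β * ‖ξ - ξ'‖)
    -- (iii) differentiability of the expected loss with gradient the expected gradient
    (hdiff : ∀ θ ∈ Θ, Differentiable ℝ (fun ξ => ∫ z, ℓ z ξ ∂(D θ)))
    (hgradInt : ∀ (ξ : EuclideanSpace ℝ (Fin d)), ∀ θ ∈ Θ,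
      Integrable (fun z => gradient (ℓ z) ξ) (D θ))
    (hgrad : ∀ θ ∈ Θ, ∀ ξ : EuclideanSpace ℝ (Fin d),
      gradient (fun ξ' => ∫ z, ℓ z ξ' ∂(D θ)) ξ = ∫ z, gradient (ℓ z) ξ ∂(D θ))
    -- (iv) ε-sensitivity in dual (Kantorovich–Rubinstein) form
    (hsens : ∀ g : Z → ℝ, LipschitzWith 1 g → (∀ θ ∈ Θ, Integrable g (D θ)) →
      ∀ θ ∈ Θ, ∀ θ' ∈ Θ,
        |(∫ z, g z ∂(D θ)) - ∫ z, g z ∂(D θ')| ≤ ε * ‖θ - θ'‖)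
    -- the RRM update operator
    (G : EuclideanSpace ℝ (Fin d) → EuclideanSpace ℝ (Fin d))
    (hGmem : ∀ θ ∈ Θ, G θ ∈ Θ)
    (hGmin : ∀ θ ∈ Θ, ∀ ξ ∈ Θ, (∫ z, ℓ z (G θ) ∂(D θ)) ≤ ∫ z, ℓ z ξ ∂(D θ)) :
    ∀ θ ∈ Θ, ∀ θ' ∈ Θ, ‖G θ - G θ'‖ ≤ ε * (β / γ) * ‖θ - θ'‖ :=
  rrm_operator_contraction_general Θ hΘconv ℓ γ β ε hγ hβ D hProb hdiffℓ hsc hsmoothz hdiff hgradInt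
    hgrad hsens G hGmem hGmin
end
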